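/- For every graph G, the tree-layout characterization of edge-treewidth holds: etw(G) equals the minimum over all tree-layouts T = (T,r,τ) of G of max over nodes u of |E_G(X_T(u))|, where X_T(u) is the set of vertices of G mapped into the subtree rooted at u. -/

import Mathlib

open Classical

/-- A finite loopless multigraph: a finite vertex type, a finite edge type, and an
endpoint function assigning to every edge an unordered pair of distinct vertices. -/
structure FinMGraph where
  V : Type
  E : Type
  [fV : Fintype V]
  [fE : Fintype E]
  [dV : DecidableEq V]
  ends : E → Sym2 V
  loopless : ∀ e, ¬ (ends e).IsDiag

attribute [instance] FinMGraph.fV FinMGraph.fE FinMGraph.dV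

namespace FinMGraph

variable (G : FinMGraph)

/-- One-step adjacency inside the vertex set `S` (i.e. in the induced subgraph `G[S]`). -/
def stepIn (S : Set G.V) (a b : G.V) : Prop :=
  a ∈ S ∧ b ∈ S ∧ ∃ e : G.E, G.ends e = s(a, b)

/-- The vertex set of the connected component of `v` in the induced subgraph `G[S]`. -/
def comp (S : Set G.V) (v : G.V) : Set G.V :=
  {w | Relation.ReflTransGen (G.stepIn S) v w}

/-- The number of edges (counted with multiplicity) with exactly one endpoint in `X`. -/
noncomputable def cut (X : Set G.V) : ℕ :=
  Nat.card {e : G.E // ∃ a b, G.ends e = s(a, b) ∧ a ∈ X ∧ b ∉ X}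

/-- For a layout `L` (a linear ordering of the vertices) the set `S_i` of vertices
occurring at position `i` or later. -/
def tail (L : Fin (Fintype.card G.V) ≃ G.V) (i : Fin (Fintype.card G.V)) : Set G.V :=
  {v | i ≤ L.symm v}

/-- The cost `δ^ec(i) = |E_G(C_G(S_i, x_i))|` of position `i` in the layout `L`. -/
noncomputable def cost (L : Fin (Fintype.card G.V) ≃ G.V) (i : Fin (Fintype.card G.V)) : ℕ :=
  G.cut (G.comp (G.tail L i) (L i))

/-- The edge-treewidth of `G`: the minimum over all layouts of the maximum cost. -/
noncomputable def etw : ℕ :=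
  sInf {k | ∃ L : Fin (Fintype.card G.V) ≃ G.V, ∀ i, G.cost L i ≤ k}

end FinMGraph

namespace FinMGraph

variable (G : FinMGraph)

/-- `G` is a forest: every edge is a bridge, i.e. after removing an edge its two
endpoints are no longer connected. -/
def IsForest : Prop :=
  ∀ (e : G.E) (a b : G.V), G.ends e = s(a, b) →
    ¬ Relation.ReflTransGen (fun x y => ∃ f : G.E, f ≠ e ∧ G.ends f = s(x, y)) a b

/-- A cycle of length `k` in `G`, given by an injective cyclic sequence of vertices and an
injective sequence of distinct edges joining consecutive vertices. -/
def IsCycleOn (k : ℕ) (v : ZMod k → G.V) (f : ZMod k → G.E) : Prop :=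
  2 ≤ k ∧ Function.Injective v ∧ Function.Injective f ∧
    ∀ i : ZMod k, G.ends (f i) = s(v i, v (i + 1))

/-- `G` is a cactus: every edge belongs to at most one cycle, i.e. any two cycles
sharing an edge have the same edge set. -/
def IsCactus : Prop :=
  ∀ (k₁ : ℕ) (v₁ : ZMod k₁ → G.V) (f₁ : ZMod k₁ → G.E)
    (k₂ : ℕ) (v₂ : ZMod k₂ → G.V) (f₂ : ZMod k₂ → G.E),
    G.IsCycleOn k₁ v₁ f₁ → G.IsCycleOn k₂ v₂ f₂ →
    (∃ e, e ∈ Set.range f₁ ∧ e ∈ Set.range f₂) → Set.range f₁ = Set.range f₂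

/-- A walk from `a` to `b` using the listed edges, in order. -/
inductive Walk : G.V → G.V → List G.E → Prop
  | nil (v : G.V) : Walk v v []
  | cons {a b c : G.V} {e : G.E} {es : List G.E} :
      G.ends e = s(a, b) → Walk b c es → Walk a c (e :: es)

/-- `H` is a subgraph of `G`. -/
def IsSubgraphOf (H : FinMGraph) : Prop :=
  ∃ (φ : H.V ↪ G.V) (ψ : H.E ↪ G.E), ∀ e, G.ends (ψ e) = (H.ends e).map φ

/-- The edge-degree of `v`: the number of incident edges, counted with multiplicity. -/
noncomputable def edeg (v : G.V) : ℕ :=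
  Nat.card {e : G.E // v ∈ G.ends e}

/-- The vertex-degree of `v`: the number of distinct neighbours of `v`. -/
noncomputable def vdeg (v : G.V) : ℕ :=
  Nat.card {w : G.V // w ≠ v ∧ ∃ e : G.E, G.ends e = s(v, w)}

/-- `H` is obtained from `G` by contracting one edge `e = {x,y}` whose endpoints both
have vertex-degree two and edge-degree two. -/
def ContractStep (H : FinMGraph) : Prop :=
  ∃ (x y : G.V) (e : G.E), G.ends e = s(x, y) ∧
    G.vdeg x = 2 ∧ G.edeg x = 2 ∧ G.vdeg y = 2 ∧ G.edeg y = 2 ∧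
    ∃ (φ : G.V → H.V) (ψ : {f : G.E // f ≠ e} ≃ H.E),
      Function.Surjective φ ∧
      (∀ v w : G.V, φ v = φ w ↔ (v = w ∨ (v = x ∧ w = y) ∨ (v = y ∧ w = x))) ∧
      ∀ f : {f : G.E // f ≠ e}, H.ends (ψ f) = (G.ends f.1).map φ

/-- `H` is a weak topological minor of `G`: `H` is obtained from a subgraph of `G` by
repeatedly contracting edges whose endpoints have vertex-degree two and edge-degree two. -/
def IsWeakTopMinorOf (H G : FinMGraph) : Prop :=
  ∃ S : FinMGraph, S.IsSubgraphOf G ∧ Relation.ReflTransGen FinMGraph.ContractStep S H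

/-- The induced subgraph `G[S]` is connected. -/
def ConnectedOn (S : Set G.V) : Prop :=
  ∀ a ∈ S, ∀ b ∈ S, Relation.ReflTransGen (G.stepIn S) a b

/-- `G` is connected. -/
def Connected : Prop := G.ConnectedOn Set.univ

/-- `G` is biconnected: nonempty and removing any single vertex leaves it connected. -/
def Biconnected : Prop :=
  Nonempty G.V ∧ ∀ v : G.V, G.ConnectedOn {w | w ≠ v}

/-- The minimum cost over layouts whose first vertex is `u`. -/
noncomputable def etwFrom (u : G.V) : ℕ :=
  sInf {k | ∃ L : Fin (Fintype.card G.V) ≃ G.V, (L.symm u : ℕ) = 0 ∧ ∀ i, G.cost L i ≤ k}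

/-- The sub-multigraph of `G` on the same vertex set whose edges are those in `F`. -/
noncomputable def restrictE (F : Set G.E) : FinMGraph :=
  { V := G.V, E := {e : G.E // e ∈ F}, ends := fun e => G.ends e.1,
    loopless := fun e => G.loopless e.1 }

/-- Two edges lie in a common block: they are equal or some cycle contains both. -/
def SameBlock (e f : G.E) : Prop :=
  e = f ∨ ∃ (k : ℕ) (v : ZMod k → G.V) (g : ZMod k → G.E),
    G.IsCycleOn k v g ∧ e ∈ Set.range g ∧ f ∈ Set.range g

/-- The block of `G` containing the edge `e`. -/
noncomputable def blockOf (e : G.E) : FinMGraph :=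
  G.restrictE {f | G.SameBlock e f}

/-- The number of vertices outside `X` having a neighbour in `X`. -/
noncomputable def ncut (X : Set G.V) : ℕ :=
  Nat.card {v : G.V // v ∉ X ∧ ∃ x ∈ X, ∃ e : G.E, G.ends e = s(v, x)}

/-- Treewidth, via its layout characterization: the minimum over layouts of the
maximum of `|N_G(C_G(S_i, x_i))|`. -/
noncomputable def twl : ℕ :=
  sInf {k | ∃ L : Fin (Fintype.card G.V) ≃ G.V,
    ∀ i, G.ncut (G.comp (G.tail L i) (L i)) ≤ k}

/-- The maximum edge-degree of `G`. -/
noncomputable def maxEdeg : ℕ :=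
  sSup {m | ∃ v : G.V, m = G.edeg v}

end FinMGraph

/-- A tree-layout of `G`: a rooted tree (given by a parent function under which every
node eventually reaches the root) together with an injective mapping `τ` of the vertices
of `G` into the nodes such that the endpoints of every edge are mapped to comparable
(ancestor/descendant) nodes. -/
structure TreeLayout (G : FinMGraph) where
  T : Type
  par : T → T
  root : T
  par_root : par root = root
  reaches_root : ∀ t : T, ∃ n : ℕ, par^[n] t = root
  τ : G.V → T
  inj : Function.Injective τ
  comparable : ∀ (e : G.E) (a b : G.V), G.ends e = s(a, b) →
    (∃ n : ℕ, par^[n] (τ a) = τ b) ∨ (∃ n : ℕ, par^[n] (τ b) = τ a)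

/-- The set `X_T(u)` of vertices of `G` mapped to descendants of the node `u`. -/
def TreeLayout.region {G : FinMGraph} (TL : TreeLayout G) (u : TL.T) : Set G.V :=
  {x | ∃ n : ℕ, TL.par^[n] (TL.τ x) = u}

/-- The theta graph `θ k`: two vertices joined by `k` parallel edges. -/
def theta (k : ℕ) : FinMGraph :=
  { V := Fin 2, E := Fin k, ends := fun _ => s((0 : Fin 2), 1),
    loopless := fun _ => by rw [Sym2.mk_isDiag_iff]; decide }

/-- The cycle on `n ≥ 2` vertices. -/
def cyc (n : ℕ) (h : 2 ≤ n) : FinMGraph :=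
  letI : NeZero n := ⟨by omega⟩
  letI : Fact (1 < n) := ⟨h⟩
  { V := ZMod n, E := ZMod n, ends := fun i => s(i, i + 1),
    loopless := fun i => by
      rw [Sym2.mk_isDiag_iff]
      exact fun hh => one_ne_zero (left_eq_add.mp hh) }

/-- The multigraph `Z_n^3`, obtained from the cycle on `n ≥ 2` vertices by doubling
every edge. -/
def Z3 (n : ℕ) (h : 2 ≤ n) : FinMGraph :=
  letI : NeZero n := ⟨by omega⟩
  letI : Fact (1 < n) := ⟨h⟩
  { V := ZMod n, E := ZMod n × Fin 2, ends := fun p => s(p.1, p.1 + 1),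
    loopless := fun p => by
      rw [Sym2.mk_isDiag_iff]
      exact fun hh => one_ne_zero (left_eq_add.mp hh) }
/-!
From a layout `⟨x_1, …, x_n⟩` one builds a tree-layout by making `x_i` a child of `x_j`,
where `j < i` is the last position whose component `C_G(S_j, x_j)` contains `x_i`; these
components form a laminar family, and the subtree below `x_j` is exactly `C_G(S_j, x_j)`.
Conversely, listing the vertices of a tree-layout by increasing depth puts every vertex
after its ancestors, so each component `C_G(S_i, x_i)` lies in `X_T(τ x_i)` while no vertex
of `X_T(τ x_i)` precedes `x_i`: every edge leaving the component then leaves `X_T(τ x_i)`.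
-/

theorem Function.exists_iterate_eq_iterate_or {α : Type*} (f : α → α) (x : α) (m m' : ℕ) :
    (∃ k, f^[k] (f^[m] x) = f^[m'] x) ∨ (∃ k, f^[k] (f^[m'] x) = f^[m] x) := by
  rcases le_total m m' with h | h
  · exact Or.inl ⟨m' - m, by rw [← Function.iterate_add_apply, Nat.sub_add_cancel h]⟩
  · exact Or.inr ⟨m - m', by rw [← Function.iterate_add_apply, Nat.sub_add_cancel h]⟩

theorem Fintype.exists_equivFin_monotone {α β : Type*} [Fintype α] [LinearOrder β]
    (f : α → β) : ∃ L : Fin (Fintype.card α) ≃ α, Monotone (f ∘ L) := by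
  let e := (Fintype.equivFin α).symm
  exact ⟨(Tuple.sort (f ∘ e)).trans e, Tuple.monotone_sort (f ∘ e)⟩

namespace FinMGraph

variable {G : FinMGraph}

lemma stepIn_symm {S : Set G.V} {a b : G.V} (h : G.stepIn S a b) : G.stepIn S b a := by
  obtain ⟨ha, hb, e, he⟩ := h
  exact ⟨hb, ha, e, by rw [he, Sym2.eq_swap]⟩

instance (S : Set G.V) : Std.Symm (G.stepIn S) := ⟨fun _ _ => stepIn_symm⟩

lemma mem_comp_self (S : Set G.V) (v : G.V) : v ∈ G.comp S v := Relation.ReflTransGen.refl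

lemma comp_subset {S : Set G.V} {v : G.V} (hv : v ∈ S) : G.comp S v ⊆ S := by
  intro w hw
  induction hw with
  | refl => exact hv
  | tail _ h _ => exact h.2.1

lemma mem_comp_comm {S : Set G.V} {v w : G.V} (h : w ∈ G.comp S v) : v ∈ G.comp S w :=
  Std.Symm.symm (r := Relation.ReflTransGen (G.stepIn S)) _ _ h

lemma comp_mono {S S' : Set G.V} (hS : S ⊆ S') (v : G.V) : G.comp S v ⊆ G.comp S' v :=
  fun w => Relation.ReflTransGen.mono (fun _ _ h => ⟨hS h.1, hS h.2.1, h.2.2⟩) v w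

lemma mem_comp_of_stepIn {S : Set G.V} {v a b : G.V} (ha : a ∈ G.comp S v)
    (h : G.stepIn S a b) : b ∈ G.comp S v :=
  Relation.ReflTransGen.tail ha h

lemma cut_le_cut {X Y : Set G.V}
    (h : ∀ e a b, G.ends e = s(a, b) → a ∈ X → b ∉ X → a ∈ Y ∧ b ∉ Y) :
    G.cut X ≤ G.cut Y :=
  Nat.card_le_card_of_injective
    (fun p => ⟨p.1, by
      obtain ⟨a, b, he, ha, hb⟩ := p.2
      exact ⟨a, b, he, h _ _ _ he ha hb⟩⟩)
    (fun p q hpq => Subtype.ext (congrArg Subtype.val hpq :))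

lemma cut_univ : G.cut Set.univ = 0 := by
  rw [cut, Nat.card_eq_zero]
  exact Or.inl ⟨fun ⟨_, _, _, _, _, hb⟩ => hb trivial⟩

section Layout

variable (L : Fin (Fintype.card G.V) ≃ G.V)

lemma mem_tail_iff {i : Fin (Fintype.card G.V)} {v : G.V} : v ∈ G.tail L i ↔ i ≤ L.symm v :=
  Iff.rfl

def compAt (i : Fin (Fintype.card G.V)) : Set G.V := G.comp (G.tail L i) (L i)

variable {L}

lemma mem_compAt_self (i : Fin (Fintype.card G.V)) : L i ∈ G.compAt L i :=
  mem_comp_self _ _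

lemma mem_compAt_symm (v : G.V) : v ∈ G.compAt L (L.symm v) := by
  simpa using mem_compAt_self (L := L) (L.symm v)

lemma le_symm_of_mem_compAt {i : Fin (Fintype.card G.V)} {x : G.V}
    (hx : x ∈ G.compAt L i) : i ≤ L.symm x :=
  comp_subset (by simp [mem_tail_iff]) hx

lemma compAt_subset_of_mem {i j : Fin (Fintype.card G.V)} (hij : i ≤ j) {x : G.V}
    (hxi : x ∈ G.compAt L i) (hxj : x ∈ G.compAt L j) : G.compAt L j ⊆ G.compAt L i := by
  have hS : G.tail L j ⊆ G.tail L i := fun _ hv => hij.trans hv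
  intro u hu
  exact hxi.trans ((comp_mono hS x (mem_comp_comm hxj)).trans (comp_mono hS (L j) hu))

lemma mem_compAt_trans {i : Fin (Fintype.card G.V)} {x y : G.V} (hy : y ∈ G.compAt L i)
    (hx : x ∈ G.compAt L (L.symm y)) : x ∈ G.compAt L i :=
  compAt_subset_of_mem (le_symm_of_mem_compAt hy) hy (mem_compAt_symm y) hx

end Layout

end FinMGraph

namespace TreeLayout

open FinMGraph

variable {G : FinMGraph}

section OfLayout

variable (L : Fin (Fintype.card G.V) ≃ G.V)

/-- The earlier positions whose component contains `x`: in the tree-layout of `L` they are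
the positions of the proper ancestors of `x`. -/
noncomputable def ancestorPositions (x : G.V) : Finset (Fin (Fintype.card G.V)) :=
  Finset.univ.filter fun j => j < L.symm x ∧ x ∈ G.compAt L j

noncomputable def layoutParent (x : G.V) : Option G.V :=
  if h : (ancestorPositions L x).Nonempty then some (L ((ancestorPositions L x).max' h))
  else none

variable {L}

lemma layoutParent_eq_some {x y : G.V} (h : layoutParent L x = some y) :
    L.symm y < L.symm x ∧ x ∈ G.compAt L (L.symm y) := by
  unfold layoutParent at h
  split_ifs at h with hne
  cases h
  simpa [ancestorPositions] using Finset.max'_mem _ hne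

lemma exists_layoutParent_of_mem_compAt {x : G.V} {i : Fin (Fintype.card G.V)}
    (hi : i < L.symm x) (hx : x ∈ G.compAt L i) :
    ∃ y, layoutParent L x = some y ∧ i ≤ L.symm y := by
  have hmem : i ∈ ancestorPositions L x := by simpa [ancestorPositions] using ⟨hi, hx⟩
  exact ⟨_, dif_pos ⟨i, hmem⟩, by simpa using Finset.le_max' _ i hmem⟩

variable (L) in
noncomputable def layoutPar (o : Option G.V) : Option G.V := o.bind (layoutParent L)

lemma layoutPar_iterate_none (m : ℕ) : (layoutPar L)^[m] none = none :=
  Function.iterate_fixed rfl m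

lemma exists_layoutPar_iterate_eq_none (x : G.V) : ∃ m, (layoutPar L)^[m] (some x) = none := by
  cases h : layoutParent L x with
  | none => exact ⟨1, h⟩
  | some y =>
    obtain ⟨m, hm⟩ := exists_layoutPar_iterate_eq_none y
    exact ⟨m + 1, by rwa [Function.iterate_succ_apply, layoutPar, Option.bind_some, h]⟩
termination_by L.symm x
decreasing_by exact (layoutParent_eq_some h).1

lemma exists_layoutPar_iterate_of_mem_compAt {x : G.V} {i : Fin (Fintype.card G.V)}
    (hx : x ∈ G.compAt L i) : ∃ m, (layoutPar L)^[m] (some x) = some (L i) := by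
  rcases (le_symm_of_mem_compAt hx).eq_or_lt with hi | hi
  · exact ⟨0, by simp [hi]⟩
  · obtain ⟨y, hy, hiy⟩ := exists_layoutParent_of_mem_compAt hi hx
    have hyx := layoutParent_eq_some hy
    have hyi : y ∈ G.compAt L i :=
      compAt_subset_of_mem hiy hx hyx.2 (mem_compAt_symm y)
    obtain ⟨m, hm⟩ := exists_layoutPar_iterate_of_mem_compAt hyi
    exact ⟨m + 1, by rwa [Function.iterate_succ_apply, layoutPar, Option.bind_some, hy]⟩
termination_by L.symm x
decreasing_by exact hyx.1

lemma mem_compAt_of_layoutPar_iterate {m : ℕ} {x v : G.V}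
    (h : (layoutPar L)^[m] (some x) = some v) : x ∈ G.compAt L (L.symm v) := by
  induction m generalizing x with
  | zero =>
    cases Option.some_injective _ h
    exact mem_compAt_symm _
  | succ m ih =>
    rw [Function.iterate_succ_apply, layoutPar, Option.bind_some] at h
    cases hp : layoutParent L x with
    | none => rw [hp, layoutPar_iterate_none] at h; cases h
    | some y =>
      rw [hp] at h
      exact mem_compAt_trans (ih h) (layoutParent_eq_some hp).2

variable (L)

noncomputable def ofLayout : TreeLayout G where
  T := Option G.V
  par := layoutPar L
  root := none
  par_root := rfl
  reaches_root := fun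
    | none => ⟨0, rfl⟩
    | some x => exists_layoutPar_iterate_eq_none x
  τ := some
  inj := Option.some_injective _
  comparable e a b he := by
    have key : ∀ a b, G.ends e = s(a, b) → L.symm a ≤ L.symm b →
        ∃ m, (layoutPar L)^[m] (some b) = some a := fun a b he hab => by
      have hb : b ∈ G.compAt L (L.symm a) :=
        mem_comp_of_stepIn (mem_compAt_symm a) ⟨by simp [mem_tail_iff], hab, e, by simpa⟩
      simpa using exists_layoutPar_iterate_of_mem_compAt hb
    rcases le_total (L.symm a) (L.symm b) with h | h
    · exact Or.inr (key a b he h)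
    · exact Or.inl (key b a (by rw [he, Sym2.eq_swap]) h)

lemma region_ofLayout_none : (ofLayout L).region none = Set.univ :=
  Set.eq_univ_of_forall exists_layoutPar_iterate_eq_none

lemma region_ofLayout_some (v : G.V) :
    (ofLayout L).region (some v) = G.compAt L (L.symm v) := by
  ext x
  refine ⟨fun ⟨_, hm⟩ => mem_compAt_of_layoutPar_iterate hm, fun hx => ?_⟩
  have := exists_layoutPar_iterate_of_mem_compAt hx
  rwa [Equiv.apply_symm_apply] at this

end OfLayout

variable (TL : TreeLayout G)

lemma mem_region_self (x : G.V) : x ∈ TL.region (TL.τ x) := ⟨0, rfl⟩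

variable {TL}

lemma mem_region_trans {x y : G.V} {u : TL.T} (hx : x ∈ TL.region (TL.τ y))
    (hy : y ∈ TL.region u) : x ∈ TL.region u := by
  obtain ⟨m, hm⟩ := hx
  obtain ⟨n, hn⟩ := hy
  exact ⟨n + m, by rw [Function.iterate_add_apply, hm, hn]⟩

lemma mem_region_or_mem_region {p x y : G.V} (hx : p ∈ TL.region (TL.τ x))
    (hy : p ∈ TL.region (TL.τ y)) : x ∈ TL.region (TL.τ y) ∨ y ∈ TL.region (TL.τ x) := by
  obtain ⟨m, hm⟩ := hx
  obtain ⟨n, hn⟩ := hy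
  show (∃ k, TL.par^[k] (TL.τ x) = TL.τ y) ∨ ∃ k, TL.par^[k] (TL.τ y) = TL.τ x
  rw [← hm, ← hn]
  exact Function.exists_iterate_eq_iterate_or _ _ m n

variable (TL) in
noncomputable def depth (t : TL.T) : ℕ := Nat.find (TL.reaches_root t)

lemma depth_lt_of_iterate {t u : TL.T} {m : ℕ} (h : TL.par^[m] t = u) (hne : u ≠ t) :
    TL.depth u < TL.depth t := by
  have ht : TL.par^[TL.depth t] t = TL.root := Nat.find_spec (TL.reaches_root t)
  have hm : m ≠ 0 := by rintro rfl; exact hne h.symm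
  rcases le_or_gt m (TL.depth t) with hmd | hdm
  · have hu : TL.par^[TL.depth t - m] u = TL.root := by
      rw [← h, ← Function.iterate_add_apply, Nat.sub_add_cancel hmd, ht]
    have : TL.depth u ≤ TL.depth t - m := Nat.find_min' _ hu
    omega
  · have hu : u = TL.root := by
      rw [← h, ← Nat.sub_add_cancel hdm.le, Function.iterate_add_apply, ht]
      exact Function.iterate_fixed TL.par_root _
    have hu0 : TL.depth u = 0 := (Nat.find_eq_zero _).2 (by simpa using hu)
    have ht0 : TL.depth t ≠ 0 := fun h0 => hne (hu.trans (by simpa [h0] using ht.symm))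
    omega

variable (TL) in
def AncestorsFirst (L : Fin (Fintype.card G.V) ≃ G.V) : Prop :=
  ∀ a b, a ∈ TL.region (TL.τ b) → L.symm b ≤ L.symm a

variable (TL) in
lemma exists_ancestorsFirst : ∃ L, TL.AncestorsFirst L := by
  obtain ⟨L, hL⟩ := Fintype.exists_equivFin_monotone fun x => TL.depth (TL.τ x)
  refine ⟨L, fun a b ⟨m, hm⟩ => ?_⟩
  rcases eq_or_ne a b with rfl | hab
  · exact le_rfl
  · refine (hL.reflect_lt ?_).le
    simpa using depth_lt_of_iterate hm (TL.inj.ne hab).symm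

lemma compAt_subset_region {L : Fin (Fintype.card G.V) ≃ G.V}
    (hL : TL.AncestorsFirst L) (i : Fin (Fintype.card G.V)) :
    G.compAt L i ⊆ TL.region (TL.τ (L i)) := by
  intro c hc
  induction hc with
  | refl => exact mem_region_self TL _
  | @tail p q _ hpq ih =>
    obtain ⟨-, hqS, e, he⟩ := hpq
    rcases TL.comparable e p q he with hpq | hqp
    · rcases mem_region_or_mem_region ih hpq with hiq | hqi
      · obtain rfl : q = L i :=
          L.symm_apply_eq.mp (le_antisymm (by simpa using hL _ _ hiq) hqS)
        exact mem_region_self TL _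
      · exact hqi
    · exact mem_region_trans hqp ih

lemma cost_le_cut_region {L : Fin (Fintype.card G.V) ≃ G.V}
    (hL : TL.AncestorsFirst L) (i : Fin (Fintype.card G.V)) :
    G.cost L i ≤ G.cut (TL.region (TL.τ (L i))) := by
  refine cut_le_cut fun e a b he ha hb => ⟨compAt_subset_region hL i ha, fun hbR => hb ?_⟩
  have hbS : i ≤ L.symm b := by simpa using hL _ _ hbR
  exact mem_comp_of_stepIn ha ⟨comp_subset (by simp [mem_tail_iff]) ha, hbS, e, he⟩

end TreeLayout

/-- the tree-layout characterization of edge-treewidth: `etw(G)` equals the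
minimum over all tree-layouts `(T, r, τ)` of `G` of the maximum over nodes `u` of
`|E_G(X_T(u))|`. -/
theorem etw_eq_treeLayout_min (G : FinMGraph) :
    G.etw = sInf {k | ∃ TL : TreeLayout G, ∀ u : TL.T, G.cut (TL.region u) ≤ k} := by
  rw [FinMGraph.etw]
  congr 1
  ext k
  constructor
  · rintro ⟨L, hL⟩
    refine ⟨TreeLayout.ofLayout L, fun u => ?_⟩
    cases u with
    | none => simp [TreeLayout.region_ofLayout_none, FinMGraph.cut_univ]
    | some v => rw [TreeLayout.region_ofLayout_some]; exact hL (L.symm v)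
  · rintro ⟨TL, hTL⟩
    obtain ⟨L, hL⟩ := TL.exists_ancestorsFirst
    exact ⟨L, fun i => (TreeLayout.cost_le_cut_region hL i).trans (hTL _)⟩
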